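/- Let N ≥ 1, let T be a countable nonempty bounded subset of ℝ^N, and let φ : ℝ → ℝ be L-Lipschitz with φ(0) = 0 and L ≥ 0. Then E_σ [ sup_{t ∈ T} Σ_{i=1}^N σ_i · φ(t_i) ] ≤ L · E_σ [ sup_{t ∈ T} Σ_{i=1}^N σ_i · t_i ], where σ = (σ₁,…,σ_N) is uniform on {−1,+1}^N (i.e., the σ_i are independent Rademacher variables). -/

import Mathlib

/-!
Replace `φ` by `x ↦ L x` one coordinate at a time. Pairing each sign pattern `σ` with the
pattern that differs from it only at coordinate `j`, the two suprema over `T` add up to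
`sup_{s,u} (a s + c s) + (a u - c u)`, where `c = ±φ(t_j)` and `a` collects the other
coordinates; since `c s - c u ≤ L |s_j - u_j|`, this is at most the same expression with
`c` replaced by `±L t_j`.
-/

open Finset Function
open scoped Pointwise

def rademacherSign (b : Bool) : ℝ := if b then 1 else -1

lemma abs_rademacherSign (b : Bool) : |rademacherSign b| = 1 := by
  cases b <;> simp [rademacherSign]

lemma rademacherSign_not (b : Bool) : rademacherSign (!b) = -rademacherSign b := by
  cases b <;> simp [rademacherSign]

lemma csSup_add_csSup_le {s t : Set ℝ} (hs : s.Nonempty) (ht : t.Nonempty) {C : ℝ}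
    (h : ∀ x ∈ s, ∀ y ∈ t, x + y ≤ C) : sSup s + sSup t ≤ C := by
  rw [← le_sub_iff_add_le]
  refine csSup_le hs fun x hx => ?_
  rw [le_sub_comm]
  exact csSup_le ht fun y hy => le_sub_iff_add_le'.mpr (h x hx y hy)

variable {α : Type*}

lemma sSup_image_add_add_sSup_image_sub_le {S : Set α} (hS : S.Nonempty)
    (a c d : α → ℝ) (had : BddAbove ((a + d) '' S)) (had' : BddAbove ((a - d) '' S))
    (hcd : ∀ s ∈ S, ∀ u ∈ S, |c s - c u| ≤ |d s - d u|) :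
    sSup ((a + c) '' S) + sSup ((a - c) '' S) ≤ sSup ((a + d) '' S) + sSup ((a - d) '' S) := by
  have hadd {x} (hx : x ∈ S) : a x + d x ≤ sSup ((a + d) '' S) := le_csSup had ⟨x, hx, rfl⟩
  have hsub {x} (hx : x ∈ S) : a x - d x ≤ sSup ((a - d) '' S) := le_csSup had' ⟨x, hx, rfl⟩
  refine csSup_add_csSup_le (hS.image _) (hS.image _) ?_
  rintro _ ⟨s, hs, rfl⟩ _ ⟨u, hu, rfl⟩
  rw [Pi.add_apply, Pi.sub_apply]
  rcases le_abs.mp ((le_abs_self _).trans (hcd s hs u hu)) with h | h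
  · linarith [hadd hs, hsub hu]
  · linarith [hadd hu, hsub hs]

variable {ι : Type*} [Fintype ι]

def signedSum (σ : ι → Bool) (h : ι → α → ℝ) : α → ℝ :=
  fun t => ∑ i, rademacherSign (σ i) * h i t

lemma image_signedSum (σ : ι → Bool) (h : ι → α → ℝ) (T : Set α) :
    signedSum σ h '' T = {r | ∃ t ∈ T, r = ∑ i, (if σ i then (1 : ℝ) else -1) * h i t} := by
  ext r
  exact exists_congr fun t => and_congr_right fun _ => eq_comm

lemma bddAbove_image_signedSum {T : Set α} (σ : ι → Bool) {h : ι → α → ℝ}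
    (hb : ∀ i, ∃ C, ∀ t ∈ T, |h i t| ≤ C) : BddAbove (signedSum σ h '' T) := by
  choose C hC using hb
  refine ⟨∑ i, C i, ?_⟩
  rintro _ ⟨t, ht, rfl⟩
  refine sum_le_sum fun i _ => (le_abs_self _).trans ?_
  rw [abs_mul, abs_rademacherSign, one_mul]
  exact hC i t ht

variable [DecidableEq ι]

lemma signedSum_eq_update_zero_add (σ : ι → Bool) (h : ι → α → ℝ) (j : ι) :
    signedSum σ h = signedSum σ (update h j 0) + rademacherSign (σ j) • h j := by
  funext t
  simp only [signedSum, Pi.add_apply, Pi.smul_apply, smul_eq_mul]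
  rw [← add_sum_erase _ _ (mem_univ j), ← add_sum_erase _ _ (mem_univ j), update_self,
    Pi.zero_apply, mul_zero, zero_add, add_comm]
  refine congrArg (· + _) (sum_congr rfl fun i hi => ?_)
  rw [update_of_ne (ne_of_mem_erase hi)]

lemma signedSum_update_update_zero (σ : ι → Bool) (h : ι → α → ℝ) (j : ι) (b : Bool) :
    signedSum (update σ j b) (update h j 0) = signedSum σ (update h j 0) := by
  funext t
  refine sum_congr rfl fun i _ => ?_
  by_cases hi : i = j
  · subst hi; simp
  · simp [update_of_ne hi]

lemma signedSum_update_not_eq_sub (σ : ι → Bool) (h : ι → α → ℝ) (j : ι) :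
    signedSum (update σ j (!σ j)) h = signedSum σ (update h j 0) - rademacherSign (σ j) • h j := by
  rw [signedSum_eq_update_zero_add _ h j, signedSum_update_update_zero, update_self,
    rademacherSign_not, neg_smul, sub_eq_add_neg]

lemma sum_sSup_image_signedSum_le_update {T : Set α} (hT : T.Nonempty) {h : ι → α → ℝ} {j : ι}
    {c : α → ℝ} (hb : ∀ i, ∃ C, ∀ t ∈ T, |update h j c i t| ≤ C)
    (hhc : ∀ s ∈ T, ∀ u ∈ T, |h j s - h j u| ≤ |c s - c u|) :
    ∑ σ, sSup (signedSum σ h '' T) ≤ ∑ σ, sSup (signedSum σ (update h j c) '' T) := by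
  have hflip : Involutive fun σ : ι → Bool => update σ j (!σ j) := fun σ => by simp
  have hsum (F : (ι → Bool) → ℝ) : 2 * ∑ σ, F σ = ∑ σ, (F σ + F (hflip.toPerm _ σ)) := by
    rw [sum_add_distrib, two_mul, Equiv.sum_comp (hflip.toPerm _) F]
  refine le_of_mul_le_mul_left ?_ two_pos
  rw [hsum, hsum]
  refine sum_le_sum fun σ _ => ?_
  have had := bddAbove_image_signedSum σ hb
  have had' := bddAbove_image_signedSum (update σ j (!σ j)) hb
  simp only [Involutive.coe_toPerm, signedSum_update_not_eq_sub, update_idem, update_self] at had' ⊢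
  rw [signedSum_eq_update_zero_add σ (update h j c) j, update_idem, update_self] at had ⊢
  rw [signedSum_eq_update_zero_add σ h j]
  refine sSup_image_add_add_sSup_image_sub_le hT _ _ _ had had' fun s hs u hu => ?_
  simp only [Pi.smul_apply, smul_eq_mul, ← mul_sub, abs_mul, abs_rademacherSign, one_mul]
  exact hhc s hs u hu

lemma exists_abs_le_of_abs_sub_le {T : Set α} (hT : T.Nonempty) {f g : α → ℝ}
    (hfg : ∀ s ∈ T, ∀ u ∈ T, |f s - f u| ≤ |g s - g u|) (hg : ∃ C, ∀ t ∈ T, |g t| ≤ C) :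
    ∃ C, ∀ t ∈ T, |f t| ≤ C := by
  obtain ⟨t₀, ht₀⟩ := hT
  obtain ⟨C, hC⟩ := hg
  refine ⟨|f t₀| + 2 * C, fun t ht => ?_⟩
  have := hfg t ht t₀ ht₀
  have := abs_sub_abs_le_abs_sub (f t) (f t₀)
  have := abs_sub (g t) (g t₀)
  linarith [hC t ht, hC t₀ ht₀]

theorem sum_sSup_image_signedSum_le_of_abs_sub_le {T : Set α} (hT : T.Nonempty)
    {f g : ι → α → ℝ} (hfg : ∀ i, ∀ s ∈ T, ∀ u ∈ T, |f i s - f i u| ≤ |g i s - g i u|)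
    (hg : ∀ i, ∃ C, ∀ t ∈ T, |g i t| ≤ C) :
    ∑ σ, sSup (signedSum σ f '' T) ≤ ∑ σ, sSup (signedSum σ g '' T) := by
  have hf i := exists_abs_le_of_abs_sub_le hT (hfg i) (hg i)
  suffices ∀ S : Finset ι, ∑ σ, sSup (signedSum σ f '' T) ≤
      ∑ σ, sSup (signedSum σ (S.piecewise g f) '' T) by
    simpa using this univ
  intro S
  induction S using Finset.induction_on with
  | empty => simp
  | insert j S hj ih =>
    have hb i : ∃ C, ∀ t ∈ T, |(insert j S).piecewise g f i t| ≤ C :=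
      piecewise_cases _ g f (fun k => ∃ C, ∀ t ∈ T, |k t| ≤ C) (hg i) (hf i)
    rw [piecewise_insert] at hb ⊢
    refine ih.trans (sum_sSup_image_signedSum_le_update hT hb ?_)
    rw [piecewise_eq_of_notMem _ _ _ hj]
    exact hfg j

theorem talagrand_contraction_general
    {N : ℕ}
    (T : Set (Fin N → ℝ)) (hTne : T.Nonempty)
    (hTbdd : ∃ B : ℝ, ∀ t ∈ T, ∀ i, |t i| ≤ B)
    (φ : ℝ → ℝ) (L : ℝ) (hL : 0 ≤ L)
    (hφ : ∀ s t : ℝ, |φ s - φ t| ≤ L * |s - t|) :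
    (∑ σ : Fin N → Bool,
        sSup {r : ℝ | ∃ t ∈ T, r = ∑ i, (if σ i then (1 : ℝ) else -1) * φ (t i)}) / 2 ^ N
      ≤ L *
        ((∑ σ : Fin N → Bool,
          sSup {r : ℝ | ∃ t ∈ T, r = ∑ i, (if σ i then (1 : ℝ) else -1) * t i}) / 2 ^ N) := by
  obtain ⟨B, hB⟩ := hTbdd
  have hcontract := sum_sSup_image_signedSum_le_of_abs_sub_le hTne
    (f := fun i t => φ (t i)) (g := fun i t => L * t i)
    (fun i s _ u _ => by rw [← mul_sub, abs_mul, abs_of_nonneg hL]; exact hφ _ _)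
    (fun i => ⟨L * B, fun t ht => by
      rw [abs_mul, abs_of_nonneg hL]; exact mul_le_mul_of_nonneg_left (hB t ht i) hL⟩)
  have hscale (σ : Fin N → Bool) : signedSum σ (fun i t => L * t i) '' T
      = L • (signedSum σ (fun i t => t i) '' T) := by
    rw [← Set.image_smul, ← Set.image_comp]
    congr 1
    funext t
    simp [signedSum, mul_sum, mul_left_comm]
  simp only [hscale, Real.sSup_smul_of_nonneg hL, smul_eq_mul, ← mul_sum, image_signedSum]
    at hcontract
  rw [mul_div_assoc']
  gcongr

/-- **Talagrand contraction lemma for Rademacher averages.**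
For `N ≥ 1`, a countable nonempty bounded set `T ⊆ ℝ^N`, and an `L`-Lipschitz function
`φ : ℝ → ℝ` with `φ(0) = 0` and `L ≥ 0`,
`E_σ [sup_{t ∈ T} Σᵢ σᵢ · φ(tᵢ)] ≤ L · E_σ [sup_{t ∈ T} Σᵢ σᵢ · tᵢ]`,
where the expectation over the independent uniform Rademacher signs `σ ∈ {−1,+1}^N`
is written as the average over all `2^N` sign patterns. -/
theorem talagrand_contraction
    {N : ℕ} (hN : 1 ≤ N)
    (T : Set (Fin N → ℝ)) (hTc : T.Countable) (hTne : T.Nonempty)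
    (hTbdd : ∃ B : ℝ, ∀ t ∈ T, ∀ i, |t i| ≤ B)
    (φ : ℝ → ℝ) (L : ℝ) (hL : 0 ≤ L)
    (hφ : ∀ s t : ℝ, |φ s - φ t| ≤ L * |s - t|) (hφ0 : φ 0 = 0) :
    (∑ σ : Fin N → Bool,
        sSup {r : ℝ | ∃ t ∈ T, r = ∑ i, (if σ i then (1 : ℝ) else -1) * φ (t i)}) / 2 ^ N
      ≤ L *
        ((∑ σ : Fin N → Bool,
          sSup {r : ℝ | ∃ t ∈ T, r = ∑ i, (if σ i then (1 : ℝ) else -1) * t i}) / 2 ^ N) :=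
  talagrand_contraction_general T hTne hTbdd φ L hL hφ
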